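/- The ten states |ψ₅₅,…,ψ₅₈⟩ = ∑_{j=0}^{3} i^{jk}|j,j,j⟩ (k = 0,1,2,3, i = e^{2πi/4}), |ψ₅₉,₆₀⟩ = |122⟩±|211⟩, |ψ₆₁,₆₂⟩ = |112⟩±|221⟩, |ψ₆₃,₆₄⟩ = |121⟩±|212⟩ are pairwise orthogonal in ℂ⁴⊗ℂ⁴⊗ℂ⁴, and each of them is entangled across every bipartition A|BC, B|AC, and C|AB (genuinely entangled). -/
import Mathlib


open Finset

/-- standard basis vector `e_a ⊗ e_b ⊗ e_c` of `ℂ⁴⊗ℂ⁴⊗ℂ⁴`. -/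
def ket4 (a b c : Fin 4) : Fin 4 × Fin 4 × Fin 4 → ℂ := fun p => if p = (a, b, c) then 1 else 0

/-- the ten genuinely entangled states `|ψ₅₅⟩,…,|ψ₆₄⟩`:
four GHZ states `∑_j i^{jk}|j,j,j⟩` (`i = e^{2πi/4}`) and three `±` pairs. -/
noncomputable def tenState : Fin 10 → (Fin 4 × Fin 4 × Fin 4 → ℂ)
  | 0 => fun p => if p.2.1 = p.1 ∧ p.2.2 = p.1 then
      (Complex.exp (2 * Real.pi * Complex.I / 4)) ^ ((p.1 : ℕ) * 0) else 0
  | 1 => fun p => if p.2.1 = p.1 ∧ p.2.2 = p.1 then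
      (Complex.exp (2 * Real.pi * Complex.I / 4)) ^ ((p.1 : ℕ) * 1) else 0
  | 2 => fun p => if p.2.1 = p.1 ∧ p.2.2 = p.1 then
      (Complex.exp (2 * Real.pi * Complex.I / 4)) ^ ((p.1 : ℕ) * 2) else 0
  | 3 => fun p => if p.2.1 = p.1 ∧ p.2.2 = p.1 then
      (Complex.exp (2 * Real.pi * Complex.I / 4)) ^ ((p.1 : ℕ) * 3) else 0
  | 4 => ket4 1 2 2 + ket4 2 1 1
  | 5 => ket4 1 2 2 - ket4 2 1 1
  | 6 => ket4 1 1 2 + ket4 2 2 1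
  | 7 => ket4 1 1 2 - ket4 2 2 1
  | 8 => ket4 1 2 1 + ket4 2 1 2
  | 9 => ket4 1 2 1 - ket4 2 1 2

lemma hI : Complex.exp (2 * Real.pi * Complex.I / 4) = Complex.I := by
  have h : (2 * Real.pi * Complex.I / 4) = (Real.pi/2 : ℝ) * Complex.I := by push_cast; ring
  rw [h, Complex.exp_mul_I]; simp

lemma v3 : ((3:Fin 4):ℕ) = 3 := rfl

lemma hI2 : Complex.exp ((Real.pi :ℂ) * Complex.I * (1/2)) = Complex.I := by
  have h : (Real.pi :ℂ) * Complex.I * (1/2) = (Real.pi/2 : ℝ) * Complex.I := by push_cast; ring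
  rw [h, Complex.exp_mul_I]; simp

lemma cI : (starRingEnd ℂ) Complex.I = - Complex.I := Complex.conj_I

lemma notA (ψ : Fin 4 × Fin 4 × Fin 4 → ℂ) (a a' b b' c c' : Fin 4)
    (h : ψ (a,b,c) * ψ (a',b',c') ≠ ψ (a,b',c') * ψ (a',b,c)) :
    ¬ ∃ (u : Fin 4 → ℂ) (w : Fin 4 × Fin 4 → ℂ),
      ∀ p : Fin 4 × Fin 4 × Fin 4, ψ p = u p.1 * w (p.2.1, p.2.2) := by
  rintro ⟨u, w, hw⟩
  exact h (by simp only [hw]; ring)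

lemma notB (ψ : Fin 4 × Fin 4 × Fin 4 → ℂ) (a a' b b' c c' : Fin 4)
    (h : ψ (a,b,c) * ψ (a',b',c') ≠ ψ (a,b',c) * ψ (a',b,c')) :
    ¬ ∃ (u : Fin 4 → ℂ) (w : Fin 4 × Fin 4 → ℂ),
      ∀ p : Fin 4 × Fin 4 × Fin 4, ψ p = u p.2.1 * w (p.1, p.2.2) := by
  rintro ⟨u, w, hw⟩
  exact h (by simp only [hw]; ring)

lemma notC (ψ : Fin 4 × Fin 4 × Fin 4 → ℂ) (a a' b b' c c' : Fin 4)
    (h : ψ (a,b,c) * ψ (a',b',c') ≠ ψ (a,b,c') * ψ (a',b',c)) :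
    ¬ ∃ (u : Fin 4 → ℂ) (w : Fin 4 × Fin 4 → ℂ),
      ∀ p : Fin 4 × Fin 4 × Fin 4, ψ p = u p.2.2 * w (p.1, p.2.1) := by
  rintro ⟨u, w, hw⟩
  exact h (by simp only [hw]; ring)

set_option maxHeartbeats 2000000 in
theorem tenStates_orthogonal_and_genuinely_entangled :
    (∀ k l : Fin 10, k ≠ l →
      ∑ p : Fin 4 × Fin 4 × Fin 4,
        (starRingEnd ℂ) (tenState k p) * tenState l p = 0) ∧
    (∀ k : Fin 10,
      (¬ ∃ (u : Fin 4 → ℂ) (w : Fin 4 × Fin 4 → ℂ),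
          ∀ p : Fin 4 × Fin 4 × Fin 4, tenState k p = u p.1 * w (p.2.1, p.2.2)) ∧
      (¬ ∃ (u : Fin 4 → ℂ) (w : Fin 4 × Fin 4 → ℂ),
          ∀ p : Fin 4 × Fin 4 × Fin 4, tenState k p = u p.2.1 * w (p.1, p.2.2)) ∧
      (¬ ∃ (u : Fin 4 → ℂ) (w : Fin 4 × Fin 4 → ℂ),
          ∀ p : Fin 4 × Fin 4 × Fin 4, tenState k p = u p.2.2 * w (p.1, p.2.1))) := by
  constructor
  · intro k l hkl
    fin_cases k <;> fin_cases l <;>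
      first
        | exact absurd rfl hkl
        | (simp [tenState, ket4, hI, Fintype.sum_prod_type, Fin.sum_univ_four, v3, cI] <;>
            (try simp [pow_succ, Complex.I_mul_I, mul_assoc]))
  · intro k
    fin_cases k
    · exact ⟨notA _ 0 1 0 1 0 1 (by simp [tenState, hI]),
             notB _ 0 1 0 1 0 1 (by simp [tenState, hI]),
             notC _ 0 1 0 1 0 1 (by simp [tenState, hI])⟩
    · exact ⟨notA _ 0 1 0 1 0 1 (by simp [tenState, hI]),
             notB _ 0 1 0 1 0 1 (by simp [tenState, hI]),
             notC _ 0 1 0 1 0 1 (by simp [tenState, hI])⟩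
    · exact ⟨notA _ 0 1 0 1 0 1 (by simp [tenState, hI]),
             notB _ 0 1 0 1 0 1 (by simp [tenState, hI]),
             notC _ 0 1 0 1 0 1 (by simp [tenState, hI])⟩
    · exact ⟨notA _ 0 1 0 1 0 1 (by simp [tenState, hI]),
             notB _ 0 1 0 1 0 1 (by simp [tenState, hI]),
             notC _ 0 1 0 1 0 1 (by simp [tenState, hI])⟩
    · exact ⟨notA _ 1 2 2 1 2 1 (by simp [tenState, ket4, Prod.ext_iff]),
             notB _ 1 2 2 1 2 1 (by simp [tenState, ket4, Prod.ext_iff]),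
             notC _ 1 2 2 1 2 1 (by simp [tenState, ket4, Prod.ext_iff])⟩
    · exact ⟨notA _ 1 2 2 1 2 1 (by simp [tenState, ket4, Prod.ext_iff]),
             notB _ 1 2 2 1 2 1 (by simp [tenState, ket4, Prod.ext_iff]),
             notC _ 1 2 2 1 2 1 (by simp [tenState, ket4, Prod.ext_iff])⟩
    · exact ⟨notA _ 1 2 1 2 2 1 (by simp [tenState, ket4, Prod.ext_iff]),
             notB _ 1 2 1 2 2 1 (by simp [tenState, ket4, Prod.ext_iff]),
             notC _ 1 2 1 2 2 1 (by simp [tenState, ket4, Prod.ext_iff])⟩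
    · exact ⟨notA _ 1 2 1 2 2 1 (by simp [tenState, ket4, Prod.ext_iff]),
             notB _ 1 2 1 2 2 1 (by simp [tenState, ket4, Prod.ext_iff]),
             notC _ 1 2 1 2 2 1 (by simp [tenState, ket4, Prod.ext_iff])⟩
    · exact ⟨notA _ 1 2 2 1 1 2 (by simp [tenState, ket4, Prod.ext_iff]),
             notB _ 1 2 2 1 1 2 (by simp [tenState, ket4, Prod.ext_iff]),
             notC _ 1 2 2 1 1 2 (by simp [tenState, ket4, Prod.ext_iff])⟩
    · exact ⟨notA _ 1 2 2 1 1 2 (by simp [tenState, ket4, Prod.ext_iff]),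
             notB _ 1 2 2 1 1 2 (by simp [tenState, ket4, Prod.ext_iff]),
             notC _ 1 2 2 1 1 2 (by simp [tenState, ket4, Prod.ext_iff])⟩
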